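/- Define, for a prime p with p^{h_p}||h (h_p ≥ 1) and complex shifts α,β,γ,δ and s, the local factor C_p(s) = (C^{(0)}(s) - p^{-1}C^{(1)}(s) + p^{-2}C^{(2)}(s))/(1 - p^{-α-δ-2s}), where C^{(0)}(s) = 1 - p^{(-α-δ-2s)(1+h_p)}, C^{(1)}(s) = (p^{γ-δ} + p^{α-β} p^{-α-δ-2s})(1 - p^{(-α-δ-2s)h_p}), and C^{(2)}(s) = p^{α-β+γ-δ}(p^{-α-δ-2s} - p^{(-α-δ-2s)h_p}). Then C_p(-s) with shifts (α,β,γ,δ) equals p^{h_p(-α-δ+2s)} times C_p(s) with shifts (-δ,-γ,-β,-α), wherever both sides are defined. -/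
import Mathlib


noncomputable section

/-- C^{(0)}(s) = 1 - p^{(-α-δ-2s)(1+h_p)}. -/
def Cfac0 (p : ℕ) (m : ℕ) (α β γ δ s : ℂ) : ℂ :=
  1 - (p : ℂ) ^ ((-α - δ - 2 * s) * (1 + (m : ℂ)))

/-- C^{(1)}(s) = (p^{γ-δ} + p^{α-β} p^{-α-δ-2s})(1 - p^{(-α-δ-2s)h_p}). -/
def Cfac1 (p : ℕ) (m : ℕ) (α β γ δ s : ℂ) : ℂ :=
  ((p : ℂ) ^ (γ - δ) + (p : ℂ) ^ (α - β) * (p : ℂ) ^ (-α - δ - 2 * s)) *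
    (1 - (p : ℂ) ^ ((-α - δ - 2 * s) * (m : ℂ)))

/-- C^{(2)}(s) = p^{α-β+γ-δ}(p^{-α-δ-2s} - p^{(-α-δ-2s)h_p}). -/
def Cfac2 (p : ℕ) (m : ℕ) (α β γ δ s : ℂ) : ℂ :=
  (p : ℂ) ^ (α - β + γ - δ) *
    ((p : ℂ) ^ (-α - δ - 2 * s) - (p : ℂ) ^ ((-α - δ - 2 * s) * (m : ℂ)))

/-- The local arithmetical factor C_p(s). -/
def Clocal (p : ℕ) (m : ℕ) (α β γ δ s : ℂ) : ℂ :=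
  (Cfac0 p m α β γ δ s - (p : ℂ)⁻¹ * Cfac1 p m α β γ δ s +
      ((p : ℂ) ^ 2)⁻¹ * Cfac2 p m α β γ δ s) /
    (1 - (p : ℂ) ^ (-α - δ - 2 * s))

/-- Key rational-function identity underlying the functional equation. -/
lemma key_identity (z Z a b q : ℂ) (hz : z ≠ 0) (hZ : Z ≠ 0)
    (h1 : 1 - z ≠ 0) (h2 : 1 - z⁻¹ ≠ 0) :
    (1 - z * Z - q * ((a + b * z) * (1 - Z)) + q ^ 2 * (b * a * (z - Z))) / (1 - z)
      = Z * ((1 - z⁻¹ * Z⁻¹ - q * ((b + a * z⁻¹) * (1 - Z⁻¹))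
          + q ^ 2 * (a * b * (z⁻¹ - Z⁻¹))) / (1 - z⁻¹)) := by
  rw [mul_div_assoc', div_eq_div_iff h1 h2]
  field_simp
  ring

/-- Functional equation of the local factor:
C_p(-s) with shifts (α,β,γ,δ) equals p^{h_p(-α-δ+2s)} C_p(s) with shifts (-δ,-γ,-β,-α). -/
theorem Clocal_functional_equation (p : ℕ) (hp : p.Prime) (m : ℕ) (hm : 1 ≤ m)
    (α β γ δ s : ℂ)
    (hd1 : 1 - (p : ℂ) ^ (-α - δ + 2 * s) ≠ 0)
    (hd2 : 1 - (p : ℂ) ^ (α + δ - 2 * s) ≠ 0) :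
    Clocal p m α β γ δ (-s)
      = (p : ℂ) ^ ((m : ℂ) * (-α - δ + 2 * s)) * Clocal p m (-δ) (-γ) (-β) (-α) s := by
  have hp0 : (p : ℂ) ≠ 0 := Nat.cast_ne_zero.mpr hp.pos.ne'
  have e1 : -α - δ - 2 * (-s) = -α - δ + 2 * s := by ring
  have e2 : -(-δ) - (-α) - 2 * s = -(-α - δ + 2 * s) := by ring
  have ea : -β - -α = α - β := by ring
  have eb : -δ - -γ = γ - δ := by ring
  have ec : -δ - -γ + -β - -α = (α - β) + (γ - δ) := by ring
  have ed : α - β + γ - δ = (α - β) + (γ - δ) := by ring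
  have ec2 : γ - δ + -β - -α = (α - β) + (γ - δ) := by ring
  set t : ℂ := -α - δ + 2 * s with ht
  have hz : (p : ℂ) ^ t ≠ 0 := by
    simp [Complex.cpow_eq_zero_iff, hp0]
  have hZ : ((p : ℂ) ^ t) ^ m ≠ 0 := pow_ne_zero _ hz
  have hm1 : (p : ℂ) ^ (t * (1 + (m : ℂ))) = (p : ℂ) ^ t * ((p : ℂ) ^ t) ^ m := by
    rw [mul_add, mul_one, Complex.cpow_add _ _ hp0, mul_comm t (m : ℂ),
      Complex.cpow_nat_mul]
  have hm2 : (p : ℂ) ^ (t * (m : ℂ)) = ((p : ℂ) ^ t) ^ m := by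
    rw [mul_comm, Complex.cpow_nat_mul]
  have hm3 : (p : ℂ) ^ (-t * (1 + (m : ℂ))) = ((p : ℂ) ^ t)⁻¹ * (((p : ℂ) ^ t) ^ m)⁻¹ := by
    rw [show -t * (1 + (m : ℂ)) = -(t * (1 + (m : ℂ))) by ring, Complex.cpow_neg, hm1,
      mul_inv]
  have hm4 : (p : ℂ) ^ (-t * (m : ℂ)) = (((p : ℂ) ^ t) ^ m)⁻¹ := by
    rw [show -t * (m : ℂ) = -(t * (m : ℂ)) by ring, Complex.cpow_neg, hm2]
  have hm5 : (p : ℂ) ^ ((m : ℂ) * t) = ((p : ℂ) ^ t) ^ m := Complex.cpow_nat_mul _ _ _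
  have hnegt : (p : ℂ) ^ (-t) = ((p : ℂ) ^ t)⁻¹ := Complex.cpow_neg _ _
  have hec : (p : ℂ) ^ ((α - β) + (γ - δ)) = (p : ℂ) ^ (α - β) * (p : ℂ) ^ (γ - δ) :=
    Complex.cpow_add _ _ hp0
  have hd2' : 1 - ((p : ℂ) ^ t)⁻¹ ≠ 0 := by
    rw [show α + δ - 2 * s = -t by rw [ht]; ring, hnegt] at hd2
    exact hd2
  simp only [Clocal, Cfac0, Cfac1, Cfac2, e1, e2, ea, eb, ec, ec2, ed, ← ht, hm1, hm2, hm3, hm4,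
    hm5, hnegt, hec]
  have hq2 : ((p : ℂ) ^ 2)⁻¹ = ((p : ℂ)⁻¹) ^ 2 := by rw [inv_pow]
  rw [hq2]
  have := key_identity ((p : ℂ) ^ t) (((p : ℂ) ^ t) ^ m) ((p : ℂ) ^ (γ - δ))
    ((p : ℂ) ^ (α - β)) ((p : ℂ)⁻¹) hz hZ hd1 hd2'
  linear_combination this
end
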